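/- arXiv:2605.06621 — 4 statements merged into one kernel-verified Lean document; each statement's English description precedes it below -/
import Mathlib

section
/- Let δ ∈ (0, 1/2), p > 1, and let a be a positive integer. Suppose r is a positive real number satisfying p·δ·(3/2)^(p−1) ≤ r/a^(p−1) ≤ p·(1 − δ). Then the distance from (a^p + r)^(1/p) to the nearest integer is strictly greater than δ. -/
/-- Distance from a real number to the nearest integer. -/
noncomputable def nearestIntDist (t : ℝ) : ℝ := |t - round t|

/-! Strict convexity of `x ↦ x ^ p` places `a ^ p + r` strictly between `(a + δ) ^ p` and
`(a + 1 - δ) ^ p`: the upper bound is the tangent line at `a`, the lower one the tangent line at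
`a + δ`, where `(a + δ) ^ (p - 1) ≤ (3/2) ^ (p - 1) a ^ (p - 1)` because `a ≥ 1`. Taking `p`-th roots,
`(a ^ p + r) ^ (1/p)` lies in `(a + δ, a + 1 - δ)`, at distance more than `δ` from every integer. -/

theorem rpow_add_mul_rpow_sub_one_lt {x h p : ℝ} (hx : 0 < x) (hxh : 0 ≤ x + h) (hh : h ≠ 0)
    (hp : 1 < p) : x ^ p + p * h * x ^ (p - 1) < (x + h) ^ p := by
  have hs : -1 ≤ h / x := by rw [le_div_iff₀ hx]; linarith
  have hbern := one_add_mul_self_lt_rpow_one_add hs (div_ne_zero hh hx.ne') hp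
  have hsplit : (x + h) ^ p = x ^ p * (1 + h / x) ^ p := by
    rw [← Real.mul_rpow hx.le (by linarith), mul_add, mul_one, mul_div_cancel₀ _ hx.ne']
  calc x ^ p + p * h * x ^ (p - 1) = x ^ p * (1 + p * (h / x)) := by
        rw [Real.rpow_sub_one hx.ne']; field_simp
    _ < x ^ p * (1 + h / x) ^ p := mul_lt_mul_of_pos_left hbern (by positivity)
    _ = (x + h) ^ p := hsplit.symm

theorem rpow_add_lt_of_mul_rpow_sub_one_le {x d p r : ℝ} (hx : 0 < x) (hd : 0 < d) (hp : 1 < p)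
    (hr : p * d * (x + d) ^ (p - 1) ≤ r) : (x + d) ^ p < x ^ p + r := by
  have := rpow_add_mul_rpow_sub_one_lt (x := x + d) (h := -d) (by positivity) (by linarith)
    (by linarith) hp
  rw [add_neg_cancel_right] at this
  linarith

theorem add_lt_rpow_add_of_le_mul_rpow_sub_one {x d p r : ℝ} (hx : 0 < x) (hd : 0 < d)
    (hp : 1 < p) (hr : r ≤ p * d * x ^ (p - 1)) : x ^ p + r < (x + d) ^ p := by
  linarith [rpow_add_mul_rpow_sub_one_lt hx (by linarith) hd.ne' hp]

theorem add_rpow_le_of_le_half {x y q : ℝ} (hy : 0 ≤ y) (hyx : y ≤ x / 2) (hq : 0 ≤ q) :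
    (x + y) ^ q ≤ (3/2) ^ q * x ^ q := by
  rw [← Real.mul_rpow (by norm_num) (by linarith)]
  exact Real.rpow_le_rpow (by linarith) (by linarith) hq

theorem lt_nearestIntDist_of_add_lt_of_lt_add_sub {δ t : ℝ} (n : ℤ) (h₁ : n + δ < t)
    (h₂ : t < n + 1 - δ) : δ < nearestIntDist t := by
  rw [nearestIntDist]
  rcases le_or_gt (round t) n with h | h
  · have : (round t : ℝ) ≤ n := by exact_mod_cast h
    linarith [le_abs_self (t - round t)]
  · have : (n : ℝ) + 1 ≤ round t := by exact_mod_cast h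
    linarith [neg_abs_le (t - round t)]

theorem stmt3_general (δ : ℝ) (hδ : δ ∈ Set.Ioo (0:ℝ) (1/2)) (p : ℝ) (hp : 1 < p)
    (a : ℕ) (ha : 0 < a) (r : ℝ)
    (h1 : p * δ * (3/2) ^ (p - 1) ≤ r / (a : ℝ) ^ (p - 1))
    (h2 : r / (a : ℝ) ^ (p - 1) ≤ p * (1 - δ)) :
    δ < nearestIntDist (((a : ℝ) ^ p + r) ^ (1 / p)) := by
  obtain ⟨hδ0, hδ2⟩ := hδ
  have hA : (1 : ℝ) ≤ a := by exact_mod_cast ha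
  have hApos : 0 < (a : ℝ) ^ (p - 1) := by positivity
  rw [le_div_iff₀ hApos] at h1
  rw [div_le_iff₀ hApos] at h2
  have hslope : p * δ * (a + δ : ℝ) ^ (p - 1) ≤ r :=
    calc p * δ * (a + δ : ℝ) ^ (p - 1) ≤ p * δ * ((3/2) ^ (p - 1) * (a : ℝ) ^ (p - 1)) := by
          gcongr; exact add_rpow_le_of_le_half hδ0.le (by linarith) (by linarith)
      _ ≤ r := by linarith
  have hlower : (a + δ : ℝ) ^ p < a ^ p + r :=
    rpow_add_lt_of_mul_rpow_sub_one_le (by positivity) hδ0 hp hslope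
  have hupper : (a : ℝ) ^ p + r < (a + 1 - δ) ^ p := by
    rw [add_sub_assoc]
    exact add_lt_rpow_add_of_le_mul_rpow_sub_one (by positivity) (by linarith) hp h2
  have hsum : 0 ≤ (a : ℝ) ^ p + r := by
    linarith [Real.rpow_nonneg (by positivity : (0 : ℝ) ≤ a + δ) p]
  have hp0 : 0 < p := by linarith
  rw [one_div]
  refine lt_nearestIntDist_of_add_lt_of_lt_add_sub a ?_ ?_ <;> rw [Int.cast_natCast]
  · exact (Real.lt_rpow_inv_iff_of_pos (by positivity) hsum hp0).mpr hlower
  · exact (Real.rpow_inv_lt_iff_of_pos hsum (by linarith) hp0).mpr hupper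

theorem stmt3 (δ : ℝ) (hδ : δ ∈ Set.Ioo (0:ℝ) (1/2)) (p : ℝ) (hp : 1 < p)
    (a : ℕ) (ha : 0 < a) (r : ℝ) (hr : 0 < r)
    (h1 : p * δ * (3/2) ^ (p - 1) ≤ r / (a : ℝ) ^ (p - 1))
    (h2 : r / (a : ℝ) ^ (p - 1) ≤ p * (1 - δ)) :
    δ < nearestIntDist (((a : ℝ) ^ p + r) ^ (1 / p)) :=
  stmt3_general δ hδ p hp a ha r h1 h2
end

section
/- Let d ≥ 1 be an integer, δ ∈ (0, 1/2), and X > 0. If P is a finite subset of the closed ball of radius X in ℝ^(d+1) such that every pairwise distance between distinct points of P is at least δ away from any integer, and if S is the subset of P lying in a slab {x : c ≤ x₁ ≤ c + δ/2} of width δ/2, then the orthogonal projection onto the hyperplane x₁ = 0 is injective on S, and the projected set has all pairwise distances at least δ/2 away from any integer. -/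
lemma nearestIntDist_min (x : ℝ) (n : ℤ) : nearestIntDist x ≤ |x - n| := by
  unfold nearestIntDist
  rw [abs_sub_round_eq_min]
  rcases le_or_gt (n : ℝ) (⌊x⌋ : ℝ) with h | h
  · have h1 : Int.fract x ≤ x - n := by
      have := Int.fract_add_floor x
      have : x - n = Int.fract x + ((⌊x⌋ : ℝ) - n) := by
        rw [Int.fract]; ring
      linarith
    calc min (Int.fract x) (1 - Int.fract x) ≤ Int.fract x := min_le_left _ _
      _ ≤ x - n := h1
      _ ≤ |x - n| := le_abs_self _
  · have hn : (⌊x⌋ : ℝ) + 1 ≤ n := by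
      have : ⌊x⌋ + 1 ≤ n := by exact_mod_cast h
      exact_mod_cast this
    have h1 : 1 - Int.fract x ≤ n - x := by
      have : n - x = ((n : ℝ) - ⌊x⌋ - 1) + (1 - Int.fract x) := by
        rw [Int.fract]; ring
      linarith
    calc min (Int.fract x) (1 - Int.fract x) ≤ 1 - Int.fract x := min_le_right _ _
      _ ≤ n - x := h1
      _ ≤ |x - n| := by rw [abs_sub_comm]; exact le_abs_self _

lemma nearestIntDist_lip (a b : ℝ) : nearestIntDist a ≤ |a - b| + nearestIntDist b := by
  calc nearestIntDist a ≤ |a - round b| := nearestIntDist_min a (round b)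
    _ = |(a - b) + (b - round b)| := by ring_nf
    _ ≤ |a - b| + |b - round b| := abs_add_le _ _

theorem stmt4 (d : ℕ) (hd : 1 ≤ d) (δ X : ℝ) (hδ : δ ∈ Set.Ioo (0:ℝ) (1/2)) (hX : 0 < X)
    (P : Finset (EuclideanSpace ℝ (Fin (d+1))))
    (hP : ∀ p ∈ P, p ∈ Metric.closedBall (0 : EuclideanSpace ℝ (Fin (d+1))) X)
    (hdist : ∀ p ∈ P, ∀ q ∈ P, p ≠ q → δ ≤ nearestIntDist (dist p q))
    (c : ℝ) (S : Finset (EuclideanSpace ℝ (Fin (d+1)))) (hS : S ⊆ P)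
    (hslab : ∀ p ∈ S, c ≤ p 0 ∧ p 0 ≤ c + δ/2)
    (proj : EuclideanSpace ℝ (Fin (d+1)) → EuclideanSpace ℝ (Fin d))
    (hproj : ∀ p, ∀ i : Fin d, proj p i = p i.succ) :
    (∀ p ∈ S, ∀ q ∈ S, proj p = proj q → p = q) ∧
    (∀ p ∈ S, ∀ q ∈ S, p ≠ q → δ/2 ≤ nearestIntDist (dist (proj p) (proj q))) := by
  obtain ⟨hδ0, hδhalf⟩ := hδ
  -- key geometric facts
  have hsq : ∀ p q : EuclideanSpace ℝ (Fin (d+1)),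
      dist p q ^ 2 = (p 0 - q 0) ^ 2 + dist (proj p) (proj q) ^ 2 := by
    intro p q
    rw [EuclideanSpace.dist_eq, EuclideanSpace.dist_eq,
      Real.sq_sqrt (by positivity), Real.sq_sqrt (by positivity),
      Fin.sum_univ_succ]
    simp only [Real.dist_eq, sq_abs, hproj]
  have hslabdiff : ∀ p ∈ S, ∀ q ∈ S, |p 0 - q 0| ≤ δ / 2 := by
    intro p hp q hq
    obtain ⟨h1, h2⟩ := hslab p hp
    obtain ⟨h3, h4⟩ := hslab q hq
    rw [abs_le]; constructor <;> linarith
  have hle : ∀ p q : EuclideanSpace ℝ (Fin (d+1)),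
      dist (proj p) (proj q) ≤ dist p q := by
    intro p q
    have := hsq p q
    nlinarith [dist_nonneg (x := p) (y := q), dist_nonneg (x := proj p) (y := proj q),
      sq_nonneg (p 0 - q 0)]
  have hge : ∀ p ∈ S, ∀ q ∈ S, dist p q ≤ dist (proj p) (proj q) + δ / 2 := by
    intro p hp q hq
    have h1 := hsq p q
    have h2 := hslabdiff p hp q hq
    have h3 : (p 0 - q 0) ^ 2 ≤ (δ/2) ^ 2 := by
      rw [← sq_abs]; exact pow_le_pow_left₀ (abs_nonneg _) h2 2
    nlinarith [dist_nonneg (x := p) (y := q), dist_nonneg (x := proj p) (y := proj q),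
      sq_nonneg (dist (proj p) (proj q)), hδ0]
  constructor
  · intro p hp q hq hpq
    by_contra hne
    have hd' := hdist p (hS hp) q (hS hq) hne
    have hdistpq : dist p q ≤ δ / 2 := by
      have := hge p hp q hq
      rw [hpq, dist_self] at this
      linarith
    have hlt : dist p q < 1/2 := by linarith
    have : nearestIntDist (dist p q) = dist p q := by
      unfold nearestIntDist
      have : round (dist p q) = 0 := by
        rw [round_eq_zero_iff]
        constructor
        · linarith [dist_nonneg (x := p) (y := q)]
        · exact hlt
      rw [this]; simp [abs_of_nonneg dist_nonneg]
    linarith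
  · intro p hp q hq hne
    have hd' := hdist p (hS hp) q (hS hq) hne
    have h1 := nearestIntDist_lip (dist p q) (dist (proj p) (proj q))
    have h2 : |dist p q - dist (proj p) (proj q)| ≤ δ / 2 := by
      rw [abs_le]
      constructor
      · linarith [hle p q]
      · linarith [hge p hp q hq]
    linarith
end

section
/- Define N_d(X, δ) as the maximum cardinality of a subset of the closed ball of radius X in ℝ^d all of whose pairwise distances are at least δ away from every integer. Then for every d ≥ 1, δ ∈ (0, 1/2), and X > 0, one has N_{d+1}(X, δ) ≤ ⌈4X/δ⌉ · N_d(X, δ/2). -/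
/-- `N d X δ` is the maximum cardinality of a subset of the closed ball of radius `X`
in `ℝ^d` all of whose pairwise distances are at least `δ` away from every integer. -/
noncomputable def maxNearIntAvoiding (d : ℕ) (X δ : ℝ) : ℕ :=
  sSup {n : ℕ | ∃ P : Finset (EuclideanSpace ℝ (Fin d)), P.card = n ∧
    (∀ p ∈ P, p ∈ Metric.closedBall (0 : EuclideanSpace ℝ (Fin d)) X) ∧
    (∀ p ∈ P, ∀ q ∈ P, p ≠ q → δ ≤ nearestIntDist (dist p q))}

/-! Cut the ball of radius `X` in `ℝ^{d+1}` into `⌈4X/δ⌉` slabs of width `δ/2` along the last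
coordinate. Within one slab, forgetting the last coordinate changes every distance by at most
`δ/2`. Since `t ↦ ⟨t⟩` is `1`-Lipschitz and `⟨t⟩ ≤ |t|`, this projection is injective on a set
whose distances stay `δ` away from the integers, and its image lies in the ball of `ℝ^d` with
distances staying `δ/2` away from the integers. -/

open Metric Finset
open scoped NNReal ENNReal

lemma nearestIntDist_le_abs (t : ℝ) : nearestIntDist t ≤ |t| := by
  simpa [nearestIntDist] using round_le t 0

lemma nearestIntDist_le_add_abs_sub (s t : ℝ) :
    nearestIntDist s ≤ nearestIntDist t + |s - t| :=
  calc |s - round s| ≤ |s - round t| := round_le s (round t)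
    _ = |(t - round t) + (s - t)| := by ring_nf
    _ ≤ |t - round t| + |s - t| := abs_add_le _ _

lemma bddAbove_card_of_le_dist {E : Type*} [PseudoMetricSpace E] {s : Set E}
    (hs : TotallyBounded s) {ε : ℝ} (hε : 0 < ε) :
    BddAbove {n : ℕ | ∃ P : Finset E, P.card = n ∧ (∀ p ∈ P, p ∈ s) ∧
      ∀ p ∈ P, ∀ q ∈ P, p ≠ q → ε ≤ dist p q} := by
  -- an `ε`-separated set is `2r`-separated, and such sets are no larger than an `r`-cover
  set r : ℝ≥0 := (ε / 4).toNNReal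
  obtain ⟨N, -, hNfin, hN⟩ := exists_finite_isCover_of_totallyBounded (ε := r) (by positivity) hs
  refine ⟨hNfin.toFinset.card, ?_⟩
  rintro _ ⟨P, rfl, hPs, hPsep⟩
  have hsep : IsSeparated ((2 * r : ℝ≥0) : ℝ≥0∞) (P : Set E) := by
    intro p hp q hq hpq
    rw [edist_nndist, ENNReal.coe_lt_coe, ← NNReal.coe_lt_coe, NNReal.coe_mul,
      Real.coe_toNNReal _ (by positivity), coe_nndist, NNReal.coe_ofNat]
    linarith [hPsep p hp q hq hpq]
  have := (hsep.encard_le_packingNumber hPs).trans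
    ((packingNumber_two_mul_le_externalCoveringNumber r s).trans
      hN.externalCoveringNumber_le_encard)
  simpa [Set.encard_coe_eq_coe_finsetCard, hNfin.encard_eq_coe_toFinset_card] using this

section NearIntAvoiding

variable {E F : Type*} [PseudoMetricSpace E] [PseudoMetricSpace F] {δ : ℝ} {P : Finset E}

def NearIntAvoiding (δ : ℝ) (P : Finset E) : Prop :=
  ∀ p ∈ P, ∀ q ∈ P, p ≠ q → δ ≤ nearestIntDist (dist p q)

lemma NearIntAvoiding.le_dist (hP : NearIntAvoiding δ P) {p q : E} (hp : p ∈ P) (hq : q ∈ P)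
    (hpq : p ≠ q) : δ ≤ dist p q :=
  (hP p hp q hq hpq).trans <| (nearestIntDist_le_abs _).trans_eq (abs_of_nonneg dist_nonneg)

lemma NearIntAvoiding.injOn_of_abs_dist_sub_le (hP : NearIntAvoiding δ P) {f : E → F} {w : ℝ}
    (hw : w < δ) (hf : ∀ p ∈ P, ∀ q ∈ P, |dist p q - dist (f p) (f q)| ≤ w) :
    Set.InjOn f P := by
  intro p hp q hq hpq
  by_contra hne
  have := hf p hp q hq
  rw [hpq, dist_self, sub_zero, abs_of_nonneg dist_nonneg] at this
  linarith [hP.le_dist hp hq hne]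

lemma NearIntAvoiding.image_of_abs_dist_sub_le [DecidableEq F] (hP : NearIntAvoiding δ P)
    {f : E → F} {w : ℝ} (hf : ∀ p ∈ P, ∀ q ∈ P, |dist p q - dist (f p) (f q)| ≤ w) :
    NearIntAvoiding (δ - w) (P.image f) := by
  simp only [NearIntAvoiding, mem_image]
  rintro _ ⟨p, hp, rfl⟩ _ ⟨q, hq, rfl⟩ hne
  have hpq : p ≠ q := fun h => hne (h ▸ rfl)
  linarith [hP p hp q hq hpq, hf p hp q hq,
    nearestIntDist_le_add_abs_sub (dist p q) (dist (f p) (f q))]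

lemma NearIntAvoiding.subset {Q : Finset E} (hP : NearIntAvoiding δ P) (hQP : Q ⊆ P) :
    NearIntAvoiding δ Q :=
  fun p hp q hq => hP p (hQP hp) q (hQP hq)

end NearIntAvoiding

lemma card_le_maxNearIntAvoiding {d : ℕ} {X δ : ℝ} (hδ : 0 < δ)
    {P : Finset (EuclideanSpace ℝ (Fin d))} (hball : ∀ p ∈ P, p ∈ closedBall 0 X)
    (hP : NearIntAvoiding δ P) : P.card ≤ maxNearIntAvoiding d X δ := by
  have hbdd := bddAbove_card_of_le_dist
    (isCompact_closedBall (0 : EuclideanSpace ℝ (Fin d)) X).totallyBounded hδ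
  refine le_csSup (hbdd.mono ?_) ⟨P, rfl, hball, hP⟩
  rintro _ ⟨Q, hcard, hQball, hQ⟩
  exact ⟨Q, hcard, hQball, fun _ hp _ hq => NearIntAvoiding.le_dist hQ hp hq⟩

lemma maxNearIntAvoiding_le {d : ℕ} {X δ : ℝ} {m : ℕ}
    (h : ∀ P : Finset (EuclideanSpace ℝ (Fin d)),
      (∀ p ∈ P, p ∈ closedBall 0 X) → NearIntAvoiding δ P → P.card ≤ m) :
    maxNearIntAvoiding d X δ ≤ m := by
  unfold maxNearIntAvoiding
  exact csSup_le ⟨0, ∅, rfl, by simp, by simp⟩ fun _ ⟨P, hcard, hball, hP⟩ => hcard ▸ h P hball hP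

section DropLast

variable {n : ℕ}

def EuclideanSpace.dropLast (p : EuclideanSpace ℝ (Fin (n + 1))) : EuclideanSpace ℝ (Fin n) :=
  WithLp.toLp 2 fun i => p i.castSucc

lemma EuclideanSpace.dist_sq_eq_dist_dropLast_sq_add (p q : EuclideanSpace ℝ (Fin (n + 1))) :
    dist p q ^ 2 = dist p.dropLast q.dropLast ^ 2 + (p (Fin.last n) - q (Fin.last n)) ^ 2 := by
  simp [EuclideanSpace.dist_sq_eq, Fin.sum_univ_castSucc, dropLast, Real.dist_eq, sq_abs]

lemma EuclideanSpace.abs_dist_sub_dist_dropLast_le (p q : EuclideanSpace ℝ (Fin (n + 1))) :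
    |dist p q - dist p.dropLast q.dropLast| ≤ |p (Fin.last n) - q (Fin.last n)| := by
  have h := dist_sq_eq_dist_dropLast_sq_add p q
  set c := p (Fin.last n) - q (Fin.last n)
  have ha : 0 ≤ dist p q := dist_nonneg
  have hb : 0 ≤ dist p.dropLast q.dropLast := dist_nonneg
  have hba : dist p.dropLast q.dropLast ≤ dist p q := by nlinarith
  rw [abs_of_nonneg (sub_nonneg.2 hba)]
  nlinarith [sq_abs c, abs_nonneg c]

lemma EuclideanSpace.norm_dropLast_le (p : EuclideanSpace ℝ (Fin (n + 1))) :
    ‖p.dropLast‖ ≤ ‖p‖ := by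
  have h := dist_sq_eq_dist_dropLast_sq_add p 0
  have h0 : (0 : EuclideanSpace ℝ (Fin (n + 1))).dropLast = 0 := rfl
  rw [h0, dist_zero_right, dist_zero_right] at h
  nlinarith [norm_nonneg p, norm_nonneg p.dropLast]

end DropLast

lemma exists_slab_index {a b w : ℝ} (hab : a < b) (hw : 0 < w) :
    ∃ k : ℝ → ℕ, (∀ t ∈ Set.Icc a b, k t < ⌈(b - a) / w⌉₊) ∧
      ∀ s ∈ Set.Icc a b, ∀ t ∈ Set.Icc a b, k s = k t → |s - t| ≤ w := by
  set M := ⌈(b - a) / w⌉₊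
  have hM : 0 < M := Nat.ceil_pos.2 (div_pos (sub_pos.2 hab) hw)
  -- the floor reaches `M` only at `t = b`, which the clamp puts into the last slab
  set k : ℝ → ℕ := fun t => min ⌊(t - a) / w⌋₊ (M - 1)
  have hk : ∀ t ∈ Set.Icc a b, (k t : ℝ) ≤ (t - a) / w ∧ (t - a) / w ≤ k t + 1 := by
    rintro t ⟨hat, htb⟩
    have hx0 : 0 ≤ (t - a) / w := div_nonneg (sub_nonneg.2 hat) hw.le
    have hxM : (t - a) / w ≤ M :=
      (div_le_div_of_nonneg_right (by linarith) hw.le).trans (Nat.le_ceil _)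
    refine ⟨(Nat.cast_le.2 (min_le_left _ _)).trans (Nat.floor_le hx0), ?_⟩
    rcases le_total ⌊(t - a) / w⌋₊ (M - 1) with h | h
    · simp only [k, min_eq_left h]
      exact (Nat.lt_floor_add_one _).le
    · simp only [k, min_eq_right h]
      exact hxM.trans (by exact_mod_cast (by omega : M ≤ M - 1 + 1))
  refine ⟨k, fun t _ => (min_le_right _ _).trans_lt (Nat.sub_lt hM one_pos), ?_⟩
  intro s hs t ht hst
  obtain ⟨hs₁, hs₂⟩ := hk s hs
  obtain ⟨ht₁, ht₂⟩ := hk t ht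
  rw [hst] at hs₁ hs₂
  have : |(s - a) / w - (t - a) / w| ≤ 1 := abs_le.2 ⟨by linarith, by linarith⟩
  rwa [← sub_div, sub_sub_sub_cancel_right, abs_div, abs_of_pos hw, div_le_one hw] at this

open EuclideanSpace in
lemma card_le_maxNearIntAvoiding_of_abs_last_sub_le {d : ℕ} {X δ : ℝ} (hδ : 0 < δ)
    {P : Finset (EuclideanSpace ℝ (Fin (d + 1)))} (hball : ∀ p ∈ P, p ∈ closedBall 0 X)
    (hP : NearIntAvoiding δ P)
    (hslab : ∀ p ∈ P, ∀ q ∈ P, |p (Fin.last d) - q (Fin.last d)| ≤ δ / 2) :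
    P.card ≤ maxNearIntAvoiding d X (δ / 2) := by
  classical
  have hclose : ∀ p ∈ P, ∀ q ∈ P, |dist p q - dist p.dropLast q.dropLast| ≤ δ / 2 :=
    fun p hp q hq => (abs_dist_sub_dist_dropLast_le p q).trans (hslab p hp q hq)
  rw [← card_image_of_injOn (hP.injOn_of_abs_dist_sub_le (half_lt_self hδ) hclose)]
  refine card_le_maxNearIntAvoiding (half_pos hδ) ?_
    (sub_half δ ▸ hP.image_of_abs_dist_sub_le hclose)
  simp only [mem_image, mem_closedBall, dist_zero_right]
  rintro _ ⟨p, hp, rfl⟩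
  exact (norm_dropLast_le p).trans (mem_closedBall_zero_iff.1 (hball p hp))

theorem stmt5_general (d : ℕ) (δ X : ℝ) (hδ : δ ∈ Set.Ioo (0:ℝ) (1/2)) (hX : 0 < X) :
    maxNearIntAvoiding (d+1) X δ ≤ ⌈4 * X / δ⌉₊ * maxNearIntAvoiding d X (δ/2) := by
  have hδ0 : 0 < δ := hδ.1
  obtain ⟨slab, hslab_lt, hslab_close⟩ := exists_slab_index (neg_lt_self hX) (half_pos hδ0)
  have hM : (X - -X) / (δ / 2) = 4 * X / δ := by field_simp; ring
  rw [hM] at hslab_lt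
  refine maxNearIntAvoiding_le fun P hball hP => ?_
  have hlast : ∀ p ∈ P, p (Fin.last d) ∈ Set.Icc (-X) X := fun p hp =>
    abs_le.1 ((PiLp.norm_apply_le p _).trans (mem_closedBall_zero_iff.1 (hball p hp)))
  rw [mul_comm, ← card_range ⌈4 * X / δ⌉₊]
  refine card_le_mul_card_image_of_maps_to (f := fun p => slab (p (Fin.last d)))
    (fun p hp => mem_range.2 (hslab_lt _ (hlast p hp))) _ fun i _ => ?_
  refine card_le_maxNearIntAvoiding_of_abs_last_sub_le hδ0
    (fun p hp => hball p (filter_subset _ _ hp)) (hP.subset (filter_subset _ _)) ?_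
  simp only [mem_filter]
  rintro p ⟨hp, hpi⟩ q ⟨hq, hqi⟩
  exact hslab_close _ (hlast p hp) _ (hlast q hq) (hpi.trans hqi.symm)

theorem stmt5 (d : ℕ) (hd : 1 ≤ d) (δ X : ℝ) (hδ : δ ∈ Set.Ioo (0:ℝ) (1/2)) (hX : 0 < X) :
    maxNearIntAvoiding (d+1) X δ ≤ ⌈4 * X / δ⌉₊ * maxNearIntAvoiding d X (δ/2) :=
  stmt5_general d δ X hδ hX
end

section
/- Let k, R > 0, let A be a finite subset of the closed ball of radius R in ℝ^k such that |p − q| is a positive integer for all distinct p, q ∈ A. Let φ : B_k(0,R) → ℝ^m satisfy c·|p−q|^{1/2} ≤ |φ(p) − φ(q)| ≤ C·|p−q|^{1/2} for all p, q, with 0 < c ≤ C, and φ(0) = 0. Let δ ≤ 2c²/(3C² + 2c²) be positive, and let λ satisfy √(3δ)/c ≤ λ ≤ √(2(1−δ))/C. Then the set {(p, λφ(p)) : p ∈ A} ⊂ ℝ^{k+m} has all pairwise distances strictly more than δ away from every integer, and is contained in the closed ball of radius √(R² + 2R). -/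
theorem lt_nearestIntDist {n : ℤ} {t δ : ℝ} (h₁ : n + δ < t) (h₂ : t < n + 1 - δ) :
    δ < nearestIntDist t := by
  rw [nearestIntDist, lt_abs]
  rcases le_or_gt (round t) n with h | h
  · left
    have : (round t : ℝ) ≤ n := by exact_mod_cast h
    linarith
  · right
    have : (n : ℝ) + 1 ≤ round t := by exact_mod_cast h
    linarith

theorem add_lt_sqrt_sq_add {a r δ : ℝ} (hδ : 0 < δ) (hδa : δ < a) (h : 3 * δ * a ≤ r) :
    a + δ < √(a ^ 2 + r) :=
  (Real.lt_sqrt (by linarith)).2 (by nlinarith)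

theorem sqrt_sq_add_lt_add_one_sub {a r δ : ℝ} (ha : 0 ≤ a) (hδ : δ < 1)
    (h : r ≤ 2 * (1 - δ) * a) : √(a ^ 2 + r) < a + 1 - δ :=
  (Real.sqrt_lt' (by linarith)).2 (by nlinarith)

theorem lt_nearestIntDist_sqrt_sq_add {n : ℕ} {r δ : ℝ} (hn : 0 < n) (hδ₀ : 0 < δ) (hδ₁ : δ < 1)
    (h₁ : 3 * δ * n ≤ r) (h₂ : r ≤ 2 * (1 - δ) * n) : δ < nearestIntDist √((n : ℝ) ^ 2 + r) := by
  have hn : (1 : ℝ) ≤ n := by exact_mod_cast hn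
  exact lt_nearestIntDist (n := n) (by exact_mod_cast add_lt_sqrt_sq_add hδ₀ (by linarith) h₁)
    (by exact_mod_cast sqrt_sq_add_lt_add_one_sub (by linarith) hδ₁ h₂)

theorem le_sq_mul_sq_of_sqrt_div_le {x c s : ℝ} (hc : 0 < c) (hs : 0 ≤ s) (h : √x / c ≤ s) :
    x ≤ s ^ 2 * c ^ 2 := by
  rw [div_le_iff₀ hc, Real.sqrt_le_left (by positivity)] at h
  linarith [mul_pow s c 2]

theorem sq_mul_sq_le_of_le_sqrt_div {y C s : ℝ} (hC : 0 < C) (hs : 0 < s) (h : s ≤ √y / C) :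
    s ^ 2 * C ^ 2 ≤ y := by
  rw [le_div_iff₀ hC, Real.le_sqrt' (by positivity)] at h
  linarith [mul_pow s C 2]

theorem mul_le_mul_sq_of_mul_sqrt_le {κ s c a d : ℝ} (hκ : κ ≤ s * c ^ 2) (hs : 0 ≤ s)
    (hc : 0 ≤ c) (ha : 0 ≤ a) (h : c * √a ≤ d) : κ * a ≤ s * d ^ 2 :=
  calc κ * a ≤ s * c ^ 2 * a := by gcongr
    _ = s * (c * √a) ^ 2 := by rw [mul_pow, Real.sq_sqrt ha, mul_assoc]
    _ ≤ s * d ^ 2 := by gcongr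

theorem mul_sq_le_mul_of_le_mul_sqrt {κ s C a d : ℝ} (hκ : s * C ^ 2 ≤ κ) (hs : 0 ≤ s)
    (hd : 0 ≤ d) (ha : 0 ≤ a) (h : d ≤ C * √a) : s * d ^ 2 ≤ κ * a :=
  calc s * d ^ 2 ≤ s * (C * √a) ^ 2 := by gcongr
    _ = s * C ^ 2 * a := by rw [mul_pow, Real.sq_sqrt ha, mul_assoc]
    _ ≤ κ * a := by gcongr

theorem dist_toLp_prod_smul {E F : Type*} [SeminormedAddCommGroup E] [NormedAddCommGroup F]
    [NormedSpace ℝ F] (f : E → F) (s : ℝ) (p q : E) :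
    dist (WithLp.toLp 2 (p, s • f p)) (WithLp.toLp 2 (q, s • f q)) =
      √(dist p q ^ 2 + s ^ 2 * dist (f p) (f q) ^ 2) := by
  rw [WithLp.prod_dist_eq_of_L2, WithLp.toLp_fst, WithLp.toLp_fst, WithLp.toLp_snd,
    WithLp.toLp_snd, dist_smul₀, mul_pow, Real.norm_eq_abs, sq_abs]

theorem stmt12_general (k m : ℕ) (R : ℝ) (hR : 0 < R)
    (A : Finset (EuclideanSpace ℝ (Fin k)))
    (hA : ∀ p ∈ A, p ∈ Metric.closedBall (0 : EuclideanSpace ℝ (Fin k)) R)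
    (hint : ∀ p ∈ A, ∀ q ∈ A, p ≠ q → ∃ n : ℕ, 0 < n ∧ dist p q = n)
    (φ : EuclideanSpace ℝ (Fin k) → EuclideanSpace ℝ (Fin m)) (c C : ℝ)
    (hc : 0 < c) (hcC : c ≤ C)
    (hφ : ∀ p ∈ Metric.closedBall (0 : EuclideanSpace ℝ (Fin k)) R,
      ∀ q ∈ Metric.closedBall (0 : EuclideanSpace ℝ (Fin k)) R,
        c * Real.sqrt (dist p q) ≤ dist (φ p) (φ q) ∧
        dist (φ p) (φ q) ≤ C * Real.sqrt (dist p q))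
    (hφ0 : φ 0 = 0)
    (δ : ℝ) (hδ0 : 0 < δ)
    (lam : ℝ) (hlam1 : Real.sqrt (3 * δ) / c ≤ lam)
    (hlam2 : lam ≤ Real.sqrt (2 * (1 - δ)) / C)
    (lift : EuclideanSpace ℝ (Fin k) →
      WithLp 2 (EuclideanSpace ℝ (Fin k) × EuclideanSpace ℝ (Fin m)))
    (hlift : ∀ p, lift p = (WithLp.equiv 2 _).symm (p, lam • φ p)) :
    (∀ p ∈ A, ∀ q ∈ A, p ≠ q →
      δ < nearestIntDist (dist (lift p) (lift q))) ∧
    (∀ p ∈ A, lift p ∈ Metric.closedBall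
      (0 : WithLp 2 (EuclideanSpace ℝ (Fin k) × EuclideanSpace ℝ (Fin m)))
      (Real.sqrt (R^2 + 2*R))) := by
  have hC : 0 < C := hc.trans_le hcC
  have hlam : 0 < lam := (div_pos (Real.sqrt_pos.2 (by positivity)) hc).trans_le hlam1
  have hlo : 3 * δ ≤ lam ^ 2 * c ^ 2 := le_sq_mul_sq_of_sqrt_div_le hc hlam.le hlam1
  have hhi : lam ^ 2 * C ^ 2 ≤ 2 * (1 - δ) := sq_mul_sq_le_of_le_sqrt_div hC hlam hlam2
  have hδ1 : δ < 1 := by nlinarith [mul_pos (pow_pos hlam 2) (pow_pos hC 2)]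
  have hdist : ∀ p q, dist (lift p) (lift q) =
      √(dist p q ^ 2 + lam ^ 2 * dist (φ p) (φ q) ^ 2) := fun p q => by
    simpa only [hlift, WithLp.equiv_symm_apply] using dist_toLp_prod_smul φ lam p q
  refine ⟨fun p hp q hq hpq => ?_, fun p hp => ?_⟩
  · obtain ⟨n, hn, hpqn⟩ := hint p hp q hq hpq
    obtain ⟨hφlo, hφhi⟩ := hφ p (hA p hp) q (hA q hq)
    rw [hpqn] at hφlo hφhi
    rw [hdist, hpqn]
    exact lt_nearestIntDist_sqrt_sq_add hn hδ0 hδ1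
      (mul_le_mul_sq_of_mul_sqrt_le hlo (by positivity) hc.le n.cast_nonneg hφlo)
      (mul_sq_le_mul_of_le_mul_sqrt hhi (by positivity) dist_nonneg n.cast_nonneg hφhi)
  · have hpR : dist p 0 ≤ R := hA p hp
    have hφp := (hφ p (hA p hp) 0 (Metric.mem_closedBall_self hR.le)).2
    rw [hφ0] at hφp
    have hlamφp : lam ^ 2 * dist (φ p) 0 ^ 2 ≤ 2 * dist p 0 :=
      mul_sq_le_mul_of_le_mul_sqrt (by linarith) (by positivity) dist_nonneg dist_nonneg hφp
    have hlift0 : lift 0 = 0 := by simp [hlift, hφ0]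
    rw [Metric.mem_closedBall, ← hlift0, hdist, hφ0]
    exact Real.sqrt_le_sqrt <|
      add_le_add (pow_le_pow_left₀ dist_nonneg hpR 2) (hlamφp.trans (by linarith))

theorem stmt12 (k m : ℕ) (R : ℝ) (hR : 0 < R)
    (A : Finset (EuclideanSpace ℝ (Fin k)))
    (hA : ∀ p ∈ A, p ∈ Metric.closedBall (0 : EuclideanSpace ℝ (Fin k)) R)
    (hint : ∀ p ∈ A, ∀ q ∈ A, p ≠ q → ∃ n : ℕ, 0 < n ∧ dist p q = n)
    (φ : EuclideanSpace ℝ (Fin k) → EuclideanSpace ℝ (Fin m)) (c C : ℝ)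
    (hc : 0 < c) (hcC : c ≤ C)
    (hφ : ∀ p ∈ Metric.closedBall (0 : EuclideanSpace ℝ (Fin k)) R,
      ∀ q ∈ Metric.closedBall (0 : EuclideanSpace ℝ (Fin k)) R,
        c * Real.sqrt (dist p q) ≤ dist (φ p) (φ q) ∧
        dist (φ p) (φ q) ≤ C * Real.sqrt (dist p q))
    (hφ0 : φ 0 = 0)
    (δ : ℝ) (hδ0 : 0 < δ) (hδ : δ ≤ 2 * c^2 / (3 * C^2 + 2 * c^2))
    (lam : ℝ) (hlam1 : Real.sqrt (3 * δ) / c ≤ lam)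
    (hlam2 : lam ≤ Real.sqrt (2 * (1 - δ)) / C)
    (lift : EuclideanSpace ℝ (Fin k) →
      WithLp 2 (EuclideanSpace ℝ (Fin k) × EuclideanSpace ℝ (Fin m)))
    (hlift : ∀ p, lift p = (WithLp.equiv 2 _).symm (p, lam • φ p)) :
    (∀ p ∈ A, ∀ q ∈ A, p ≠ q →
      δ < nearestIntDist (dist (lift p) (lift q))) ∧
    (∀ p ∈ A, lift p ∈ Metric.closedBall
      (0 : WithLp 2 (EuclideanSpace ℝ (Fin k) × EuclideanSpace ℝ (Fin m)))
      (Real.sqrt (R^2 + 2*R))) :=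
  stmt12_general k m R hR A hA hint φ c C hc hcC hφ hφ0 δ hδ0 lam hlam1 hlam2 lift hlift
end
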